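/- The Thue-Morse word $\mathbf{t}$ avoids circular $4^+$-powers: for all words $x_1, t, x_2$ with $x_1 t x_2$ a factor of $\mathbf{t}$ and $x_2x_1$ nonempty, if $p$ is a period of $x_2 x_1$ then $|x_2x_1| \leq 4p$. -/

import Mathlib

/-- `u` occurs as a factor of the infinite word `w` (at some position `i`). -/
def FactorOf {α : Type*} (u : List α) (w : ℕ → α) : Prop :=
  ∃ i : ℕ, u = (List.range u.length).map (fun k => w (i + k))

/-- `p` is a period of the finite word `v`. -/
def HasPeriod {α : Type*} (v : List α) (p : ℕ) : Prop :=
  0 < p ∧ p ≤ v.length ∧ ∀ i : ℕ, i + p < v.length → v[i + p]? = v[i]?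

open Fin.NatCast in
/-- The Thue–Morse word: `tm n` is the sum of the binary digits of `n`, mod 2. -/
def tm : ℕ → Fin 2 := fun n => ((Nat.digits 2 n).sum : Fin 2)

/-!
If `|x₂x₁| > 4p`, one of `x₁`, `x₂` is a factor of `t` of length `> 2p` with period `p`, i.e. `t`
contains an overlap. But `t` is overlap-free, by induction on the period using `t₂ₙ = tₙ` and
`t₂ₙ₊₁ = 1 - tₙ`: an overlap of even period `2q` halves to one of period `q`; in an overlap of odd
period `p ≥ 3` consecutive letters always differ, so it alternates and its even positions give an
overlap `aaa` of period `1`; and `aaa` is impossible since `t₂ₙ ≠ t₂ₙ₊₁`.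
-/

section Words

variable {α : Type*}

/-- `w i ⋯ w (i + 2p)` is an overlap: a factor of length `2p + 1` with period `p`. -/
def HasOverlapAt (w : ℕ → α) (i p : ℕ) : Prop :=
  ∀ k ≤ p, w (i + k + p) = w (i + k)

theorem FactorOf.of_append_left {u v : List α} {w : ℕ → α} (h : FactorOf (u ++ v) w) :
    FactorOf u w := by
  obtain ⟨i, hi⟩ := h
  rw [List.length_append, List.range_add, List.map_append] at hi
  exact ⟨i, (List.append_inj hi (by simp)).1⟩

theorem FactorOf.of_append_right {u v : List α} {w : ℕ → α} (h : FactorOf (u ++ v) w) :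
    FactorOf v w := by
  obtain ⟨i, hi⟩ := h
  rw [List.length_append, List.range_add, List.map_append, List.map_map] at hi
  refine ⟨i + u.length, (List.append_inj hi (by simp)).2.trans ?_⟩
  simp only [Function.comp_def, Nat.add_assoc]

theorem HasPeriod.of_append_left {u v : List α} {p : ℕ} (h : HasPeriod (u ++ v) p)
    (hp : p ≤ u.length) : HasPeriod u p := by
  refine ⟨h.1, hp, fun k hk => ?_⟩
  have := h.2.2 k (by simp; omega)
  rwa [List.getElem?_append_left hk, List.getElem?_append_left (by omega)] at this

theorem HasPeriod.of_append_right {u v : List α} {p : ℕ} (h : HasPeriod (u ++ v) p)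
    (hp : p ≤ v.length) : HasPeriod v p := by
  refine ⟨h.1, hp, fun k hk => ?_⟩
  have := h.2.2 (u.length + k) (by simp; omega)
  rwa [List.getElem?_append_right (by omega), List.getElem?_append_right (by omega),
    show u.length + k + p - u.length = k + p by omega, Nat.add_sub_cancel_left] at this

theorem FactorOf.exists_hasOverlapAt {u : List α} {w : ℕ → α} {p : ℕ} (hu : FactorOf u w)
    (hp : HasPeriod u p) (hlen : 2 * p < u.length) : ∃ i, HasOverlapAt w i p := by
  obtain ⟨i, hi⟩ := hu
  have letter : ∀ j < u.length, u[j]? = some (w (i + j)) := fun j hj => by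
    rw [hi]; simp [hj]
  refine ⟨i, fun k hk => ?_⟩
  have := hp.2.2 k (by omega)
  rwa [letter _ (by omega), letter _ (by omega), Option.some_inj, ← Nat.add_assoc] at this

end Words

theorem tm_two_mul (n : ℕ) : tm (2 * n) = tm n := by
  rcases n.eq_zero_or_pos with rfl | hn
  · rfl
  · simp [tm, Nat.digits_def' one_lt_two (by omega : 0 < 2 * n)]

open Fin.NatCast in
theorem tm_two_mul_add_one (n : ℕ) : tm (2 * n + 1) = tm n + 1 := by
  rw [tm, Nat.digits_def' one_lt_two (by omega), List.sum_cons,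
    show (2 * n + 1) % 2 = 1 by omega, show (2 * n + 1) / 2 = n by omega, add_comm]
  exact Nat.cast_succ _

theorem tm_succ_ne_of_even {n : ℕ} (hn : Even n) : tm (n + 1) ≠ tm n := by
  obtain ⟨m, rfl⟩ := hn
  rw [← two_mul, tm_two_mul_add_one, tm_two_mul]
  generalize tm m = a
  revert a
  decide

theorem tm_not_hasOverlapAt_one (i : ℕ) : ¬ HasOverlapAt tm i 1 := by
  intro h
  rcases Nat.even_or_odd i with hi | hi
  · exact tm_succ_ne_of_even hi (h 0 zero_le_one)
  · exact tm_succ_ne_of_even hi.add_one (h 1 le_rfl)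

theorem HasOverlapAt.tm_half {i q : ℕ} (h : HasOverlapAt tm i (2 * q)) :
    HasOverlapAt tm (i / 2) q := by
  intro k hk
  have := h (2 * k) (by omega)
  rcases Nat.even_or_odd' i with ⟨a, rfl | rfl⟩
  · rw [show 2 * a / 2 = a by omega]
    rwa [show 2 * a + 2 * k + 2 * q = 2 * (a + k + q) by ring, ← mul_add, tm_two_mul,
      tm_two_mul] at this
  · rw [show (2 * a + 1) / 2 = a by omega]
    rwa [show 2 * a + 1 + 2 * k + 2 * q = 2 * (a + k + q) + 1 by ring,
      show 2 * a + 1 + 2 * k = 2 * (a + k) + 1 by ring, tm_two_mul_add_one, tm_two_mul_add_one,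
      add_left_inj] at this

theorem HasOverlapAt.tm_exists_one_of_odd {i p : ℕ} (h : HasOverlapAt tm i p) (hodd : Odd p)
    (hp : 3 ≤ p) : ∃ m, HasOverlapAt tm m 1 := by
  -- Of the positions `i + k` and `i + k + p` one is even, and the period transports the
  -- inequality of consecutive letters from one to the other.
  have adjacent_ne : ∀ k < 2 * p, tm (i + k + 1) ≠ tm (i + k) := by
    have pair : ∀ k < p, tm (i + k + 1) ≠ tm (i + k) ∧ tm (i + k + p + 1) ≠ tm (i + k + p) := by
      intro k hk
      have e₀ := h k hk.le
      have e₁ := h (k + 1) hk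
      rw [show i + (k + 1) + p = i + k + p + 1 by omega, ← Nat.add_assoc] at e₁
      rw [e₁, e₀, and_self]
      rcases Nat.even_or_odd (i + k) with he | ho
      · exact tm_succ_ne_of_even he
      · rw [← e₀, ← e₁]
        exact tm_succ_ne_of_even (ho.add_odd hodd)
    intro k hk
    rcases lt_or_ge k p with hkp | hkp
    · exact (pair k hkp).1
    · simpa [show i + (k - p) + p = i + k by omega] using (pair (k - p) (by omega)).2
  have alternate : ∀ k, k + 2 ≤ 2 * p → tm (i + k + 2) = tm (i + k) := by
    intro k hk
    have h₀ := adjacent_ne k (by omega)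
    have h₁ := adjacent_ne (k + 1) (by omega)
    rw [← Nat.add_assoc] at h₁
    exact (by decide : ∀ a b c : Fin 2, a ≠ b → b ≠ c → a = c) _ _ _ h₁ h₀
  obtain ⟨m, r, hr, rfl⟩ : ∃ m r, r < 2 ∧ i = 2 * m + r := ⟨i / 2, i % 2, by omega, by omega⟩
  refine ⟨m + r, fun k hk => ?_⟩
  have := alternate (r + 2 * k) (by omega)
  rwa [show 2 * m + r + (r + 2 * k) + 2 = 2 * (m + r + k + 1) by omega,
    show 2 * m + r + (r + 2 * k) = 2 * (m + r + k) by omega,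
    tm_two_mul, tm_two_mul] at this

theorem tm_not_hasOverlapAt {i p : ℕ} (hp : 0 < p) : ¬ HasOverlapAt tm i p := by
  induction p using Nat.strong_induction_on generalizing i with
  | _ p ih =>
    intro h
    obtain ⟨q, rfl | rfl⟩ := Nat.even_or_odd' p
    · exact ih q (by omega) (by omega) h.tm_half
    · rcases q.eq_zero_or_pos with rfl | hq
      · exact tm_not_hasOverlapAt_one i h
      · obtain ⟨m, hm⟩ := h.tm_exists_one_of_odd (odd_two_mul_add_one q) (by omega)
        exact ih 1 (by omega) one_pos hm

theorem thueMorse_avoids_circular_four_plus_powers :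
    ∀ x₁ t x₂ : List (Fin 2), FactorOf (x₁ ++ t ++ x₂) tm → x₂ ++ x₁ ≠ [] →
      ∀ p : ℕ, HasPeriod (x₂ ++ x₁) p → (x₂ ++ x₁).length ≤ 4 * p := by
  intro x₁ t x₂ hfac _ p hper
  by_contra! hlong
  rw [List.length_append] at hlong
  obtain ⟨x, hx, hxp, hxlen⟩ : ∃ x, FactorOf x tm ∧ HasPeriod x p ∧ 2 * p < x.length := by
    rcases le_or_gt x₂.length (2 * p) with h | h
    · exact ⟨x₁, hfac.of_append_left.of_append_left, hper.of_append_right (by omega), by omega⟩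
    · exact ⟨x₂, hfac.of_append_right, hper.of_append_left (by omega), h⟩
  obtain ⟨i, hi⟩ := hx.exists_hasOverlapAt hxp hxlen
  exact tm_not_hasOverlapAt hper.1 hi
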